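/- Let τ ∈ (0,1] and let T be a rooted label tree. Suppose for every x and node v the estimate equals the true probability: η̂_v(x) = η_v(x). Then the expected prediction cost satisfies E_x[c_τ(T,x)] ≤ (1/τ)·C(T) − (1−τ)/τ, where c_τ(T,x) = 1 + Σ_v 1{η_v(x) ≥ τ}·deg(v) and C(T) = 1 + Σ_v E_x[η_v(x)]·deg(v) is the expected training cost. In particular for τ = 1/2, E_x[c_{1/2}(T,x)] ≤ 2C(T) − 1. -/
import Mathlib


/-- A rooted tree in which every node carries a value of type `α`
(here: the map `x ↦ η_v(x)`). -/
inductive VTree (α : Type) where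
  | leaf : α → VTree α
  | node : α → List (VTree α) → VTree α

namespace VTree

/-- All node values `η_v(x)` lie in `[0,1]` for every `x`. -/
def InUnit {X : Type} : VTree (X → ℝ) → Prop
  | .leaf f => ∀ x, 0 ≤ f x ∧ f x ≤ 1
  | .node f ts => (∀ x, 0 ≤ f x ∧ f x ≤ 1) ∧ ∀ c ∈ ts, c.InUnit

/-- `∑_{v ∈ V(T)} 1{η_v(x) ≥ τ}·deg(v)`, i.e. the prediction cost `c_τ(T,x)` minus one. -/
noncomputable def costTau {X : Type} (τ : ℝ) (x : X) : VTree (X → ℝ) → ℕ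
  | .leaf _ => 0
  | .node f ts => (if τ ≤ f x then ts.length else 0)
      + (ts.attach.map (fun ⟨t, _⟩ => t.costTau τ x)).sum

/-- `∑_{v ∈ V(T)} E_x[η_v(x)]·deg(v)`, i.e. the expected training cost `C(T)` minus one. -/
noncomputable def expDegSum {X : Type} [Fintype X] (q : X → ℝ) : VTree (X → ℝ) → ℝ
  | .leaf _ => 0
  | .node f ts => (∑ x : X, q x * f x) * ts.length
      + (ts.attach.map (fun ⟨t, _⟩ => t.expDegSum q)).sum

end VTree

lemma swap_list {X ι : Type} [Fintype X] (q : X → ℝ) (l : List ι) (g : ι → X → ℝ) :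
    ∑ x : X, q x * (l.map (fun c => g c x)).sum
      = (l.map (fun c => ∑ x : X, q x * g c x)).sum := by
  induction l with
  | nil => simp
  | cons a l ih => simp [mul_add, Finset.sum_add_distrib, ih]

theorem aux_main (X : Type) [Fintype X] (q : X → ℝ)
    (hq0 : ∀ x, 0 ≤ q x)
    (τ : ℝ) (hτ0 : 0 < τ)
    (t : VTree (X → ℝ)) (h : t.InUnit) :
    τ * (∑ x : X, q x * t.costTau τ x) ≤ t.expDegSum q := by
  match t with
  | .leaf f => simp [VTree.costTau, VTree.expDegSum]
  | .node f ts =>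
    rw [VTree.InUnit] at h
    obtain ⟨hf, hc⟩ := h
    have ih : ∀ c ∈ ts.attach,
        τ * (∑ x : X, q x * VTree.costTau τ x c.1) ≤ VTree.expDegSum q c.1 := by
      intro c _
      exact aux_main X q hq0 τ hτ0 c.1 (hc c.1 c.2)
    simp only [VTree.costTau, VTree.expDegSum]
    push_cast
    simp only [List.map_map, mul_add, Finset.sum_add_distrib]
    rw [swap_list q ts.attach (fun c x => ((Nat.cast ∘ fun c : {t // t ∈ ts} => VTree.costTau τ x c.1) c : ℝ))]
    apply add_le_add
    · rw [Finset.sum_mul, Finset.mul_sum]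
      apply Finset.sum_le_sum
      intro x _
      by_cases hx : τ ≤ f x
      · simp only [hx, if_true]
        calc τ * (q x * ts.length) = q x * (τ * ts.length) := by ring
          _ ≤ q x * (f x * ts.length) := by
              apply mul_le_mul_of_nonneg_left _ (hq0 x)
              exact mul_le_mul_of_nonneg_right hx (Nat.cast_nonneg _)
          _ = q x * f x * ts.length := by ring
      · simp only [hx, if_false]
        have h1 := (hf x).1
        have h2 := hq0 x
        have h3 : (0:ℝ) ≤ (ts.length:ℝ) := Nat.cast_nonneg _
        simp only [mul_zero]
        exact mul_nonneg (mul_nonneg h2 h1) h3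
    · rw [← List.sum_map_mul_left]
      apply List.sum_le_sum
      intro c hcm
      simpa using ih c hcm
termination_by t
decreasing_by
  simp_wf
  have := List.sizeOf_lt_of_mem c.2
  omega

/-- If the node probability estimates are exact, the expected prediction cost satisfies
`E_x[c_τ(T,x)] ≤ (1/τ)·C(T) − (1−τ)/τ`, where `c_τ(T,x) = 1 + ∑_v 1{η_v(x) ≥ τ}·deg(v)`
and `C(T) = 1 + ∑_v E_x[η_v(x)]·deg(v)`. -/
theorem stmt_18 (X : Type) [Fintype X] (q : X → ℝ)
    (hq0 : ∀ x, 0 ≤ q x) (hq1 : (∑ x : X, q x) = 1)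
    (t : VTree (X → ℝ)) (h01 : t.InUnit)
    (τ : ℝ) (hτ0 : 0 < τ) (hτ1 : τ ≤ 1) :
    (∑ x : X, q x * (1 + t.costTau τ x)) ≤
      (1 / τ) * (1 + t.expDegSum q) - (1 - τ) / τ := by
  have key := aux_main X q hq0 τ hτ0 t h01
  have hS : (∑ x : X, q x * (t.costTau τ x : ℝ)) ≤ t.expDegSum q / τ := by
    rw [le_div_iff₀ hτ0]
    calc (∑ x : X, q x * (t.costTau τ x : ℝ)) * τ
        = τ * (∑ x : X, q x * (t.costTau τ x : ℝ)) := by ring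
      _ ≤ t.expDegSum q := key
  have hrw : (1 / τ) * (1 + t.expDegSum q) - (1 - τ) / τ = 1 + t.expDegSum q / τ := by
    field_simp
    ring
  rw [hrw]
  simp only [mul_add, mul_one, Finset.sum_add_distrib, hq1]
  linarith
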